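/- Let α_n = Σ_{k=0}^{n} C(n−k,k) · k! and let c_m = α_m. Then the Hankel determinants satisfy det(c_{i+j})_{i,j=0}^{2n−1} = Π_{k=1}^{n} ((k−1)!)³ · k! and det(c_{i+j})_{i,j=0}^{2n} = Π_{k=1}^{n} (k−1)! · (k!)³. -/

import Mathlib

open Finset

/-- `α n = Σ_{k=0}^{n} C(n-k, k) · k!`. -/
def alphaSeq (n : ℕ) : ℕ :=
  ∑ k ∈ Finset.range (n+1), (n-k).choose k * Nat.factorial k

/-!
`α` is the moment sequence of the Jacobi continued fraction with diagonal coefficients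
`1, 0, 1, 0, …` and subdiagonal weights `c k = ⌈k/2⌉`, i.e. `1, 1, 2, 2, 3, 3, …`. For any Jacobi
continued fraction the lower unitriangular table `L` of weighted Motzkin paths factors the Hankel
matrix of the moments as `L D Lᵀ` with `D k = c 1 ⋯ c k`, so the Hankel determinant of order `N` is
`∏_{k<N} c 1 ⋯ c k`; here `c 1 ⋯ c (2t) = t!²` and `c 1 ⋯ c (2t+1) = t! (t+1)!`.

To see that `α` is this moment sequence, pair the monic Laguerre polynomials of parameter `0`
(even `k`) and `1` (odd `k`) against the sequences `j ↦ Σ_i C(m-i, i) (i+j)!`. The resulting table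
has first column `α`, first row `δ_{k0}` (orthogonality of Laguerre polynomials for the moments
`j!`), and obeys the transposed path recurrence by the three-term relations between the two
Laguerre families. Any such table recovers the moments from `L`.
-/

open Nat

section JacobiFraction

variable {R : Type*} [CommRing R] (b c : ℕ → R)

/-- The total weight of Motzkin paths from height `0` to height `k` with `m` steps, where an up
step weighs `1`, a level step at height `k` weighs `b k` and a down step from height `k + 1`
weighs `c (k + 1)`. -/
def jacobiTable : ℕ → ℕ → R
  | 0, k => if k = 0 then 1 else 0
  | m + 1, k => (if k = 0 then 0 else jacobiTable m (k - 1)) + b k * jacobiTable m k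
      + c (k + 1) * jacobiTable m (k + 1)

theorem jacobiTable_eq_zero_of_lt {m k : ℕ} (h : m < k) : jacobiTable b c m k = 0 := by
  induction m generalizing k with
  | zero => simp [jacobiTable, h.ne']
  | succ m ih =>
    simp [jacobiTable, ih (by omega : m < k - 1), ih (by omega : m < k), ih (by omega : m < k + 1)]

theorem jacobiTable_self (m : ℕ) : jacobiTable b c m m = 1 := by
  induction m with
  | zero => simp [jacobiTable]
  | succ m ih => simp [jacobiTable, ih, jacobiTable_eq_zero_of_lt]

theorem sum_range_jacobiTable_mul {G : ℕ → ℕ → R}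
    (hG : ∀ m k, G (m + 1) k = G m (k + 1) + b k * G m k + (if k = 0 then 0 else c k * G m (k - 1)))
    (i j : ℕ) : ∑ k ∈ range (j + 1), jacobiTable b c j k * G i k = G (i + j) 0 := by
  induction j generalizing i with
  | zero => simp [jacobiTable]
  | succ j ih =>
    have hT := jacobiTable_eq_zero_of_lt b c (lt_add_one j)
    calc ∑ k ∈ range (j + 2), jacobiTable b c (j + 1) k * G i k
        = ∑ k ∈ range (j + 1), jacobiTable b c j k * G i (k + 1)
          + ∑ k ∈ range (j + 1), b k * jacobiTable b c j k * G i k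
          + ∑ k ∈ range (j + 1),
              (if k = 0 then 0 else c k * jacobiTable b c j k * G i (k - 1)) := by
          simp only [jacobiTable, add_mul, sum_add_distrib]
          rw [sum_range_succ' _ (j + 1), sum_range_succ _ (j + 1), sum_range_succ _ (j + 1),
            sum_range_succ (fun k => c (k + 1) * jacobiTable b c j (k + 1) * G i k) j,
            sum_range_succ' (fun k => ite _ _ _) j]
          simp [hT, jacobiTable_eq_zero_of_lt b c (by omega : j < j + 2), mul_assoc]
      _ = ∑ k ∈ range (j + 1), jacobiTable b c j k * G (i + 1) k := by
          simp only [← sum_add_distrib, hG]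
          refine sum_congr rfl fun k _ => ?_
          split_ifs <;> ring
      _ = G (i + (j + 1)) 0 := by rw [ih, add_right_comm, add_assoc]

def jacobiWeight (k : ℕ) : R := ∏ i ∈ range k, c (i + 1)

theorem jacobiWeight_zero : jacobiWeight c 0 = 1 := prod_range_zero _

theorem jacobiWeight_succ (k : ℕ) : jacobiWeight c (k + 1) = jacobiWeight c k * c (k + 1) :=
  prod_range_succ _ _

theorem jacobiWeight_mul_jacobiTable_succ (m k : ℕ) :
    jacobiWeight c k * jacobiTable b c (m + 1) k
      = jacobiWeight c (k + 1) * jacobiTable b c m (k + 1)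
        + b k * (jacobiWeight c k * jacobiTable b c m k)
        + (if k = 0 then 0 else c k * (jacobiWeight c (k - 1) * jacobiTable b c m (k - 1))) := by
  rcases k with _ | k
  · simp only [jacobiTable, jacobiWeight_succ, jacobiWeight_zero, if_true]
    ring
  · simp only [jacobiTable, jacobiWeight_succ, add_tsub_cancel_right, if_neg (succ_ne_zero k)]
    ring

theorem jacobiTable_add_zero {N : ℕ} (i : ℕ) {j : ℕ} (hj : j < N) :
    jacobiTable b c (i + j) 0
      = ∑ k ∈ range N, jacobiTable b c i k * jacobiWeight c k * jacobiTable b c j k := by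
  have h := sum_range_jacobiTable_mul b c (G := fun m k => jacobiWeight c k * jacobiTable b c m k)
    (jacobiWeight_mul_jacobiTable_succ b c) i j
  rw [jacobiWeight_zero, one_mul] at h
  rw [← h, ← sum_subset (range_subset_range.2 hj)]
  · exact sum_congr rfl fun k _ => by ring
  · intro k _ hk
    rw [jacobiTable_eq_zero_of_lt b c (show j < k by simpa using hk), mul_zero]

theorem det_hankel_jacobiTable (N : ℕ) :
    (Matrix.of fun i j : Fin N => jacobiTable b c (i + j) 0).det
      = ∏ k ∈ range N, jacobiWeight c k := by
  set L := Matrix.of fun i k : Fin N => jacobiTable b c i k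
  have hL : L.IsLowerTriangular := fun i k hik => jacobiTable_eq_zero_of_lt b c hik
  have hLDLt : (Matrix.of fun i j : Fin N => jacobiTable b c (i + j) 0)
      = L * Matrix.diagonal (fun k : Fin N => jacobiWeight c k) * L.transpose := by
    ext i j
    rw [Matrix.mul_apply, Matrix.of_apply, jacobiTable_add_zero b c i j.isLt,
      ← Fin.sum_univ_eq_sum_range
        (fun k => jacobiTable b c i k * jacobiWeight c k * jacobiTable b c j k)]
    simp [L, Matrix.mul_diagonal]
  rw [hLDLt, Matrix.det_mul, Matrix.det_mul, Matrix.det_transpose,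
    Matrix.det_of_isLowerTriangular L hL,
    Matrix.det_diagonal, Fin.prod_univ_eq_prod_range (jacobiWeight c)]
  simp [L, jacobiTable_self]

end JacobiFraction

/-- The coefficient of `x ^ j` in the monic Laguerre polynomial of degree `t` and parameter `a`. -/
def laguerreCoeff (a t j : ℕ) : ℤ :=
  (-1) ^ (t - j) * ((t + a).choose (j + a) : ℤ) * (t.choose j : ℤ) * ((t - j)! : ℤ)

theorem laguerreCoeff_of_lt {a t j : ℕ} (h : t < j) : laguerreCoeff a t j = 0 := by
  simp [laguerreCoeff, Nat.choose_eq_zero_of_lt h]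

theorem laguerreCoeff_self (a t : ℕ) : laguerreCoeff a t t = 1 := by
  simp [laguerreCoeff]

theorem laguerreCoeff_add_left (a j r : ℕ) :
    laguerreCoeff a (j + r) j
      = (-1) ^ r * ((j + r + a).choose (j + a) : ℤ) * ((j + r).choose j : ℤ) * (r ! : ℤ) := by
  simp [laguerreCoeff]

theorem laguerreCoeff_succ (a t j : ℕ) :
    laguerreCoeff a (t + 1) j
      = laguerreCoeff (a + 1) (t + 1) j + (t + 1) * laguerreCoeff (a + 1) t j := by
  rcases lt_or_ge t j with h | h
  · rcases (succ_le_of_lt h).eq_or_lt with rfl | h'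
    · simp [laguerreCoeff_self, laguerreCoeff_of_lt h]
    · simp [laguerreCoeff_of_lt h, laguerreCoeff_of_lt h']
  obtain ⟨r, rfl⟩ := Nat.exists_eq_add_of_le h
  have hfac : ((j + (r + 1)).choose j : ℤ) * (r + 1) = ((j + r).choose j : ℤ) * (j + r + 1) := by
    have := Nat.choose_mul_succ_eq (j + r) j
    rw [show j + r + 1 - j = r + 1 by omega] at this
    exact_mod_cast this.symm
  have hpascal : ((j + (r + 1) + (a + 1)).choose (j + (a + 1)) : ℤ)
      = ((j + (r + 1) + a).choose (j + a) : ℤ) + ((j + r + (a + 1)).choose (j + (a + 1)) : ℤ) := by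
    rw [show j + (r + 1) + (a + 1) = j + (r + 1) + a + 1 by omega,
      show j + (a + 1) = j + a + 1 by omega,
      show j + r + (a + 1) = j + (r + 1) + a by omega]
    exact_mod_cast Nat.choose_succ_succ' _ _
  rw [show j + r + 1 = j + (r + 1) from rfl, laguerreCoeff_add_left, laguerreCoeff_add_left,
    laguerreCoeff_add_left, hpascal, factorial_succ]
  push_cast
  linear_combination (-1 : ℤ) ^ r * ((j + r + (a + 1)).choose (j + (a + 1)) : ℤ) * (r ! : ℤ) * hfac

theorem laguerreCoeff_param_succ (a t j : ℕ) :
    laguerreCoeff (a + 1) t j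
      = laguerreCoeff a (t + 1) (j + 1) + (t + a + 1) * laguerreCoeff a t (j + 1) := by
  rcases lt_or_ge t j with h | h
  · simp [laguerreCoeff_of_lt h, laguerreCoeff_of_lt (succ_lt_succ h),
      laguerreCoeff_of_lt (h.trans (lt_add_one j))]
  obtain ⟨r, rfl⟩ := Nat.exists_eq_add_of_le h
  rcases r with _ | s
  · simp [laguerreCoeff_self, laguerreCoeff_of_lt (lt_add_one j)]
  have hfac : ((j + 1 + s + a).choose (j + 1 + a) : ℤ) * ((j + 1 + s + a + 1 : ℕ) : ℤ)
      = ((j + 1 + s + a + 1).choose (j + 1 + a) : ℤ) * (s + 1) := by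
    have := Nat.choose_mul_succ_eq (j + 1 + s + a) (j + 1 + a)
    rw [show j + 1 + s + a + 1 - (j + 1 + a) = s + 1 by omega] at this
    exact_mod_cast this
  have hpascal : ((j + 1 + s + 1).choose (j + 1) : ℤ)
      = ((j + 1 + s).choose j : ℤ) + ((j + 1 + s).choose (j + 1) : ℤ) := by
    exact_mod_cast Nat.choose_succ_succ' _ _
  rw [laguerreCoeff_add_left (a + 1) j (s + 1), show j + (s + 1) = j + 1 + s by omega,
    laguerreCoeff_add_left a (j + 1) s, add_assoc (j + 1) s 1,
    laguerreCoeff_add_left a (j + 1) (s + 1), ← add_assoc (j + 1 + s) a 1,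
    show j + (a + 1) = j + 1 + a by omega, show j + 1 + (s + 1) + a = j + 1 + s + a + 1 by omega,
    ← add_assoc (j + 1) s 1, hpascal, factorial_succ]
  push_cast at hfac ⊢
  linear_combination -(-1 : ℤ) ^ s * ((j + 1 + s).choose (j + 1) : ℤ) * (s ! : ℤ) * hfac

theorem laguerreCoeff_succ_zero_add (a t : ℕ) :
    laguerreCoeff a (t + 1) 0 + (t + a + 1) * laguerreCoeff a t 0 = 0 := by
  have hfac :
      ((t + a).choose a : ℤ) * ((t + a + 1 : ℕ) : ℤ) = ((t + a + 1).choose a : ℤ) * (t + 1) := by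
    have := Nat.choose_mul_succ_eq (t + a) a
    rw [show t + a + 1 - a = t + 1 by omega] at this
    exact_mod_cast this
  simp only [laguerreCoeff, Nat.sub_zero, zero_add, Nat.choose_zero_right, add_right_comm t 1 a,
    factorial_succ, pow_succ]
  push_cast at hfac ⊢
  linear_combination (-1 : ℤ) ^ t * (t ! : ℤ) * hfac

/-- The linear functional `x ^ j ↦ f j` applied to the monic Laguerre polynomial of degree `t` and
parameter `a`. -/
def laguerrePairing (a t : ℕ) (f : ℕ → ℤ) : ℤ := ∑ j ∈ range (t + 1), laguerreCoeff a t j * f j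

theorem laguerrePairing_eq_sum_range {a t N : ℕ} (h : t < N) (f : ℕ → ℤ) :
    laguerrePairing a t f = ∑ j ∈ range N, laguerreCoeff a t j * f j := by
  refine sum_subset (range_subset_range.2 h) fun j _ hj => ?_
  rw [laguerreCoeff_of_lt (by simpa using hj), zero_mul]

theorem laguerrePairing_sub (a t : ℕ) (f g : ℕ → ℤ) :
    laguerrePairing a t (fun j => f j - g j) = laguerrePairing a t f - laguerrePairing a t g := by
  simp only [laguerrePairing, mul_sub, sum_sub_distrib]

theorem laguerrePairing_succ (a t : ℕ) (f : ℕ → ℤ) :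
    laguerrePairing a (t + 1) f
      = laguerrePairing (a + 1) (t + 1) f + (t + 1) * laguerrePairing (a + 1) t f := by
  rw [laguerrePairing_eq_sum_range (lt_add_one (t + 1)) f,
    laguerrePairing_eq_sum_range (lt_add_one (t + 1)) f,
    laguerrePairing_eq_sum_range (by omega : t < t + 1 + 1) f, mul_sum, ← sum_add_distrib]
  exact sum_congr rfl fun j _ => by rw [laguerreCoeff_succ]; ring

theorem laguerrePairing_shift (a t : ℕ) (f : ℕ → ℤ) :
    laguerrePairing (a + 1) t (fun j => f (j + 1))
      = laguerrePairing a (t + 1) f + (t + a + 1) * laguerrePairing a t f := by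
  rw [laguerrePairing_eq_sum_range (lt_add_one (t + 1)) f,
    laguerrePairing_eq_sum_range (by omega : t < t + 1 + 1) f,
    mul_sum, ← sum_add_distrib, sum_range_succ', laguerrePairing]
  simp only [laguerreCoeff_param_succ, add_mul, mul_assoc, sum_add_distrib]
  linear_combination (-f 0) * laguerreCoeff_succ_zero_add a t

theorem laguerrePairing_factorial (t : ℕ) :
    laguerrePairing 0 t (fun j => (j ! : ℤ)) = if t = 0 then 1 else 0 := by
  have hterm : ∀ j ∈ range (t + 1), laguerreCoeff 0 t j * (j ! : ℤ)
      = (t ! : ℤ) * (1 ^ j * (-1) ^ (t - j) * (t.choose j : ℤ)) := by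
    intro j hj
    simp only [laguerreCoeff, add_zero, one_pow, one_mul]
    rw [← Nat.choose_mul_factorial_mul_factorial (Nat.lt_succ_iff.1 (mem_range.1 hj))]
    push_cast
    ring
  rw [laguerrePairing, sum_congr rfl hterm, ← mul_sum, ← add_pow, add_neg_cancel, zero_pow_eq]
  split_ifs with h <;> simp [h]

def alphaShift (n m : ℕ) : ℤ := ∑ j ∈ range (n + 1), ((n - j).choose j : ℤ) * ((m + j)! : ℤ)

theorem alphaShift_zero_left : alphaShift 0 = fun m => (m ! : ℤ) := by
  ext m
  simp [alphaShift]

theorem alphaShift_one_left : alphaShift 1 = fun m => (m ! : ℤ) := by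
  ext m
  simp [alphaShift, sum_range_succ]

theorem alphaShift_zero_right (n : ℕ) : alphaShift n 0 = alphaSeq n := by
  simp [alphaShift, alphaSeq]

theorem alphaShift_add_two (n m : ℕ) :
    alphaShift (n + 2) m = alphaShift (n + 1) m + alphaShift n (m + 1) := by
  have hpascal : ∀ j ∈ range (n + 1), ((n + 2 - (j + 1)).choose (j + 1) : ℤ) * ((m + (j + 1))! : ℤ)
      = ((n + 1 - (j + 1)).choose (j + 1) : ℤ) * ((m + (j + 1))! : ℤ)
        + ((n - j).choose j : ℤ) * ((m + 1 + j)! : ℤ) := by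
    intro j hj
    rw [show n + 2 - (j + 1) = n - j + 1 by have := mem_range.1 hj; omega,
      show n + 1 - (j + 1) = n - j by omega, show m + 1 + j = m + (j + 1) by omega,
      Nat.choose_succ_succ']
    push_cast
    ring
  rw [alphaShift, sum_range_succ, Nat.choose_eq_zero_of_lt (by omega : n + 2 - (n + 2) < n + 2),
    sum_range_succ', sum_congr rfl hpascal, sum_add_distrib, alphaShift, sum_range_succ' _ (n + 1),
    alphaShift]
  simp only [Nat.sub_zero, Nat.choose_zero_right, cast_zero, zero_mul,
    add_zero]
  ring

def alphaJacobiDiag (k : ℕ) : ℤ := if Even k then 1 else 0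

def alphaJacobiSubdiag (k : ℕ) : ℤ := ((k + 1) / 2 : ℕ)

theorem alphaJacobiSubdiag_two_mul (t : ℕ) : alphaJacobiSubdiag (2 * t) = t := by
  rw [alphaJacobiSubdiag, show (2 * t + 1) / 2 = t by omega]

theorem alphaJacobiSubdiag_two_mul_add_one (t : ℕ) : alphaJacobiSubdiag (2 * t + 1) = t + 1 := by
  rw [alphaJacobiSubdiag, show (2 * t + 1 + 1) / 2 = t + 1 by omega, cast_succ]

/-- A closed form of
`jacobiWeight alphaJacobiSubdiag k * jacobiTable alphaJacobiDiag alphaJacobiSubdiag m k`. -/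
def alphaDualTable (m k : ℕ) : ℤ :=
  if Even k then laguerrePairing 0 (k / 2) (alphaShift m)
  else laguerrePairing 1 (k / 2) (fun j => alphaShift (m + 1) j - alphaShift m j)

theorem alphaDualTable_two_mul (m t : ℕ) :
    alphaDualTable m (2 * t) = laguerrePairing 0 t (alphaShift m) := by
  simp [alphaDualTable]

theorem alphaDualTable_two_mul_add_one (m t : ℕ) :
    alphaDualTable m (2 * t + 1)
      = laguerrePairing 1 t (fun j => alphaShift (m + 1) j - alphaShift m j) := by
  simp [alphaDualTable, show (2 * t + 1) / 2 = t by omega]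

theorem alphaDualTable_zero_left (k : ℕ) : alphaDualTable 0 k = if k = 0 then 1 else 0 := by
  obtain ⟨t, rfl | rfl⟩ := even_or_odd' k
  · simp [alphaDualTable_two_mul, alphaShift_zero_left, laguerrePairing_factorial]
  · simp [alphaDualTable_two_mul_add_one, alphaShift_zero_left, alphaShift_one_left,
      laguerrePairing]

theorem alphaDualTable_zero_right (m : ℕ) : alphaDualTable m 0 = alphaSeq m := by
  simp [alphaDualTable, laguerrePairing, laguerreCoeff, alphaShift_zero_right]

theorem alphaDualTable_succ_two_mul (m t : ℕ) :
    alphaDualTable (m + 1) (2 * t) = alphaDualTable m (2 * t + 1) + alphaDualTable m (2 * t)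
      + t * alphaDualTable m (2 * t - 1) := by
  rcases t with _ | t
  · simp [alphaDualTable, laguerrePairing, laguerreCoeff]
  rw [show 2 * (t + 1) - 1 = 2 * t + 1 by omega, alphaDualTable_two_mul, alphaDualTable_two_mul,
    alphaDualTable_two_mul_add_one, alphaDualTable_two_mul_add_one, laguerrePairing_sub,
    laguerrePairing_sub, laguerrePairing_succ 0 t (alphaShift (m + 1)),
    laguerrePairing_succ 0 t (alphaShift m)]
  push_cast
  ring

theorem alphaDualTable_succ_two_mul_add_one (m t : ℕ) :
    alphaDualTable (m + 1) (2 * t + 1)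
      = alphaDualTable m (2 * t + 2) + (t + 1) * alphaDualTable m (2 * t) := by
  have hshift : (fun j => alphaShift (m + 1 + 1) j - alphaShift (m + 1) j)
      = fun j => alphaShift m (j + 1) := by
    funext j
    rw [alphaShift_add_two]
    ring
  rw [alphaDualTable_two_mul_add_one, hshift, laguerrePairing_shift,
    show 2 * t + 2 = 2 * (t + 1) by ring,
    alphaDualTable_two_mul, alphaDualTable_two_mul]
  push_cast
  ring

theorem alphaDualTable_succ (m k : ℕ) :
    alphaDualTable (m + 1) k = alphaDualTable m (k + 1) + alphaJacobiDiag k * alphaDualTable m k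
      + (if k = 0 then 0 else alphaJacobiSubdiag k * alphaDualTable m (k - 1)) := by
  obtain ⟨t, rfl | rfl⟩ := even_or_odd' k
  · rw [alphaDualTable_succ_two_mul, alphaJacobiSubdiag_two_mul, alphaJacobiDiag,
      if_pos (even_two_mul t)]
    split_ifs with ht
    · obtain rfl : t = 0 := by omega
      simp
    · ring
  · rw [alphaDualTable_succ_two_mul_add_one, alphaJacobiSubdiag_two_mul_add_one, alphaJacobiDiag,
      if_neg (not_even_iff_odd.2 (odd_two_mul_add_one t)), if_neg (succ_ne_zero _),
      add_tsub_cancel_right]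
    ring

theorem alphaSeq_eq_jacobiTable (m : ℕ) :
    (alphaSeq m : ℤ) = jacobiTable alphaJacobiDiag alphaJacobiSubdiag m 0 := by
  have h := sum_range_jacobiTable_mul alphaJacobiDiag alphaJacobiSubdiag alphaDualTable_succ 0 m
  simpa [alphaDualTable_zero_left, alphaDualTable_zero_right] using h.symm

theorem jacobiWeight_alphaJacobiSubdiag (t : ℕ) :
    jacobiWeight alphaJacobiSubdiag (2 * t) = (t ! : ℤ) ^ 2
      ∧ jacobiWeight alphaJacobiSubdiag (2 * t + 1) = (t ! : ℤ) * ((t + 1)! : ℤ) := by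
  induction t with
  | zero => simp [jacobiWeight, alphaJacobiSubdiag]
  | succ t ih =>
    have h_even : jacobiWeight alphaJacobiSubdiag (2 * (t + 1)) = ((t + 1)! : ℤ) ^ 2 := by
      rw [show 2 * (t + 1) = 2 * t + 1 + 1 by ring, jacobiWeight_succ, ih.2,
        show 2 * t + 1 + 1 = 2 * (t + 1) by ring, alphaJacobiSubdiag_two_mul, factorial_succ]
      push_cast
      ring
    refine ⟨h_even, ?_⟩
    rw [jacobiWeight_succ, h_even, alphaJacobiSubdiag_two_mul_add_one, factorial_succ (t + 1)]
    push_cast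
    ring

theorem prod_range_two_mul_jacobiWeight_alphaJacobiSubdiag (n : ℕ) :
    ∏ k ∈ range (2 * n), jacobiWeight alphaJacobiSubdiag k
      = ∏ k ∈ Icc 1 n, ((k - 1)! : ℤ) ^ 3 * (k ! : ℤ) := by
  induction n with
  | zero => simp
  | succ n ih =>
    rw [show 2 * (n + 1) = 2 * n + 1 + 1 by ring, prod_range_succ, prod_range_succ, ih,
      (jacobiWeight_alphaJacobiSubdiag n).1, (jacobiWeight_alphaJacobiSubdiag n).2,
      prod_Icc_succ_top (by omega : 1 ≤ n + 1), Nat.add_sub_cancel]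
    ring

theorem prod_range_two_mul_add_one_jacobiWeight_alphaJacobiSubdiag (n : ℕ) :
    ∏ k ∈ range (2 * n + 1), jacobiWeight alphaJacobiSubdiag k
      = ∏ k ∈ Icc 1 n, ((k - 1)! : ℤ) * (k ! : ℤ) ^ 3 := by
  induction n with
  | zero => simp [jacobiWeight_zero]
  | succ n ih =>
    rw [show 2 * (n + 1) + 1 = 2 * n + 1 + 1 + 1 by ring, prod_range_succ, prod_range_succ, ih,
      show 2 * n + 1 + 1 = 2 * (n + 1) by ring, (jacobiWeight_alphaJacobiSubdiag (n + 1)).1,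
      (jacobiWeight_alphaJacobiSubdiag n).2, prod_Icc_succ_top (by omega : 1 ≤ n + 1),
      Nat.add_sub_cancel]
    ring

theorem det_hankel_alphaSeq (N : ℕ) :
    Matrix.det (fun i j : Fin N => (alphaSeq ((i : ℕ) + (j : ℕ)) : ℤ))
      = ∏ k ∈ range N, jacobiWeight alphaJacobiSubdiag k := by
  simp_rw [alphaSeq_eq_jacobiTable]
  exact det_hankel_jacobiTable alphaJacobiDiag alphaJacobiSubdiag N

theorem hankel_alpha (n : ℕ) :
    Matrix.det (fun i j : Fin (2*n) => (alphaSeq ((i : ℕ) + (j : ℕ)) : ℤ))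
      = ∏ k ∈ Finset.Icc 1 n, (Nat.factorial (k-1) : ℤ)^3 * (Nat.factorial k : ℤ) ∧
    Matrix.det (fun i j : Fin (2*n+1) => (alphaSeq ((i : ℕ) + (j : ℕ)) : ℤ))
      = ∏ k ∈ Finset.Icc 1 n, (Nat.factorial (k-1) : ℤ) * (Nat.factorial k : ℤ)^3 := by
  rw [det_hankel_alphaSeq, det_hankel_alphaSeq]
  exact ⟨prod_range_two_mul_jacobiWeight_alphaJacobiSubdiag n,
    prod_range_two_mul_add_one_jacobiWeight_alphaJacobiSubdiag n⟩
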